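/- For a tuple a = (a_1,…,a_n) with 0 ≤ a_i ≤ n+1−i, let C_a be the full additive subcategory of representations of the linearly oriented quiver A_n generated by the interval representations E^{ij} with i ≤ j < i + a_i. Then C_a is closed under quotients: if X is a direct sum of such intervals and X surjects onto Y, then every interval summand of Y also satisfies this condition. -/

import Mathlib

open Classical

/-- A representation of a quiver (given by vertex type `ι`, arrow type `E`,
and source/target maps `s t : E → ι`) over a field `K`: a finite-dimensional
`K`-vector space at each vertex and a linear map along each arrow. -/
structure QRep (K : Type) [Field K] {ι : Type} {E : Type} (s t : E → ι) : Type 1 where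
  V : ι → Type
  [addV : ∀ i, AddCommGroup (V i)]
  [modV : ∀ i, Module K (V i)]
  [fdV : ∀ i, FiniteDimensional K (V i)]
  f : ∀ e : E, V (s e) →ₗ[K] V (t e)

attribute [instance] QRep.addV QRep.modV QRep.fdV

namespace QRep

variable {K : Type} [Field K] {ι E : Type} {s t : E → ι}

/-- A morphism of representations: linear maps at each vertex commuting with the arrow maps. -/
structure Hom (X Y : QRep K s t) : Type where
  φ : ∀ i, X.V i →ₗ[K] Y.V i
  comm : ∀ e, (Y.f e).comp (φ (s e)) = (φ (t e)).comp (X.f e)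

def Hom.Surjective {X Y : QRep K s t} (f : Hom X Y) : Prop := ∀ i, Function.Surjective (f.φ i)

def Hom.Injective {X Y : QRep K s t} (f : Hom X Y) : Prop := ∀ i, Function.Injective (f.φ i)

/-- Two representations are isomorphic if there is a morphism bijective at every vertex. -/
def Iso (X Y : QRep K s t) : Prop := ∃ f : Hom X Y, ∀ i, Function.Bijective (f.φ i)

/-- Direct sum of two representations, taken vertexwise. -/
def dsum (X Y : QRep K s t) : QRep K s t where
  V i := X.V i × Y.V i
  f e := (X.f e).prodMap (Y.f e)

instance : Module.Finite K PUnit :=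
  Module.Finite.of_surjective (0 : K →ₗ[K] PUnit) (fun x => ⟨0, Subsingleton.elim _ _⟩)

/-- The zero representation. -/
def zero : QRep K s t where
  V _ := PUnit
  f _ := 0

/-- A representation is zero if all its vector spaces are zero. -/
def IsZero (X : QRep K s t) : Prop := ∀ i, ∀ x : X.V i, x = 0

/-- Indecomposable: nonzero, and not isomorphic to a direct sum of two nonzero representations. -/
def Indec (X : QRep K s t) : Prop :=
  ¬ X.IsZero ∧ ∀ A B : QRep K s t, Iso X (A.dsum B) → A.IsZero ∨ B.IsZero

/-- Direct sum of a finite list of representations. -/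
noncomputable def dsumList : List (QRep K s t) → QRep K s t
  | [] => zero
  | X :: L => X.dsum (dsumList L)

/-- An extension `Y` of `Z` by `X`: an injective morphism `X → Y` and a surjective
morphism `Y → Z` whose vertexwise kernel is the image of `X`. -/
structure Extension (X Y Z : QRep K s t) : Type where
  incl : Hom X Y
  proj : Hom Y Z
  inj : ∀ i, Function.Injective (incl.φ i)
  surj : ∀ i, Function.Surjective (proj.φ i)
  exact : ∀ i, LinearMap.ker (proj.φ i) = LinearMap.range (incl.φ i)

/-- An extension is trivial (split) if there is a morphism `Y → X` restricting to the identity on `X`. -/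
def Extension.Trivial {X Y Z : QRep K s t} (E : Extension X Y Z) : Prop :=
  ∃ r : Hom Y X, ∀ i x, r.φ i (E.incl.φ i x) = x

/-- A subrepresentation of `Y`: a subspace at each vertex, stable under the arrow maps. -/
structure Sub (Y : QRep K s t) : Type where
  p : ∀ i, Submodule K (Y.V i)
  stable : ∀ e, ∀ x ∈ p (s e), Y.f e x ∈ p (t e)

def Sub.toRep {Y : QRep K s t} (S : Sub Y) : QRep K s t where
  V i := S.p i
  f e := (Y.f e).restrict (S.stable e)

/-- The quotient representation `Y/X`. -/
def Sub.quot {Y : QRep K s t} (S : Sub Y) : QRep K s t where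
  V i := Y.V i ⧸ S.p i
  f e := Submodule.mapQ (S.p (s e)) (S.p (t e)) (Y.f e) (fun x hx => S.stable e x hx)

/-- The inclusion morphism of a subrepresentation. -/
def Sub.incl {Y : QRep K s t} (S : Sub Y) : Hom S.toRep Y where
  φ i := (S.p i).subtype
  comm e := by ext x; rfl

/-- The quotient morphism onto the quotient representation. -/
def Sub.mkQ {Y : QRep K s t} (S : Sub Y) : Hom Y S.quot where
  φ i := (S.p i).mkQ
  comm e := by ext x; first | rfl | simp [Sub.quot, LinearMap.comp_apply, Submodule.mapQ_apply]

/-- The space of morphisms between two representations, as a subspace of the product of Hom spaces. -/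
def HomSpace (X Y : QRep K s t) : Submodule K (∀ i, X.V i →ₗ[K] Y.V i) where
  carrier := {φ | ∀ e, (Y.f e).comp (φ (s e)) = (φ (t e)).comp (X.f e)}
  add_mem' := by
    intro a b ha hb e
    simp only [Set.mem_setOf_eq] at ha hb
    simp [LinearMap.comp_add, LinearMap.add_comp, ha e, hb e]
  zero_mem' := by intro e; simp
  smul_mem' := by
    intro c a ha e
    simp only [Set.mem_setOf_eq] at ha
    simp [LinearMap.comp_smul, LinearMap.smul_comp, ha e]

end QRep
/-- The source of the `e`-th arrow of the linearly oriented quiver `Aₙ`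
(vertices `0,…,n-1`, arrows `e → e+1` for `0 ≤ e < n-1`; 0-based indexing). -/
def ASrc (n : ℕ) (e : Fin (n - 1)) : Fin n := ⟨e.val, by have := e.isLt; omega⟩

/-- The target of the `e`-th arrow of `Aₙ`. -/
def ATgt (n : ℕ) (e : Fin (n - 1)) : Fin n := ⟨e.val + 1, by have := e.isLt; omega⟩

/-- Representations of the linearly oriented quiver `Aₙ`. -/
abbrev ARep (K : Type) [Field K] (n : ℕ) := QRep K (ASrc n) (ATgt n)

/-- The canonical map from `M` to a submodule `T`: the identity if `T = ⊤`, zero otherwise. -/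
noncomputable def toSub {K M : Type} [Field K] [AddCommGroup M] [Module K M]
    (T : Submodule K M) : M →ₗ[K] T :=
  if h : T = ⊤ then LinearMap.codRestrict T LinearMap.id (fun x => by simp [h]) else 0

/-- The vertex spaces of the interval representation `E^{ij}`: `K` for `i ≤ p ≤ j`, zero otherwise. -/
def ESub (K : Type) [Field K] (n i j : ℕ) (p : Fin n) : Submodule K K :=
  if i ≤ p.val ∧ p.val ≤ j then ⊤ else ⊥

/-- The interval representation `E^{ij}` of `Aₙ` (0-based): one-dimensional spaces at
vertices `i,…,j`, identity maps between consecutive ones, zero elsewhere. -/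
noncomputable def Eij (K : Type) [Field K] (n i j : ℕ) : ARep K n where
  V p := ESub K n i j p
  f e := (toSub (ESub K n i j (ATgt n e))).comp (ESub K n i j (ASrc n e)).subtype

/-- Direct sum of interval representations indexed by a list of pairs. -/
noncomputable def intervalSum (K : Type) [Field K] (n : ℕ) (L : List (ℕ × ℕ)) : ARep K n :=
  QRep.dsumList (L.map fun pr => Eij K n pr.1 pr.2)

/-- Membership of the pair `(i,j)` in `F_a = {(i,j) : i ≤ j < i + a_i}` (0-based;
`pr.2 < n` ensures the interval lies in the vertex range). -/
def condF (n : ℕ) (a : ℕ → ℕ) (pr : ℕ × ℕ) : Prop :=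
  pr.1 ≤ pr.2 ∧ pr.2 < n ∧ pr.2 < pr.1 + a pr.1

/-- An object lies in the full additive subcategory determined by the interval
representations `E^{ij}` with `cond (i,j)`, i.e. it is isomorphic to a finite direct sum
of such intervals. -/
def InCat (K : Type) [Field K] (n : ℕ) (cond : ℕ × ℕ → Prop) (X : ARep K n) : Prop :=
  ∃ L : List (ℕ × ℕ), (∀ pr ∈ L, cond pr) ∧ QRep.Iso X (intervalSum K n L)

/-- The subcategory of intervals satisfying `cond` is closed under quotients. -/
def QuotClosedCat (K : Type) [Field K] (n : ℕ) (cond : ℕ × ℕ → Prop) : Prop :=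
  ∀ X Y : ARep K n, InCat K n cond X → (∃ f : QRep.Hom X Y, f.Surjective) → InCat K n cond Y

/-- The subcategory of intervals satisfying `cond` is closed under extensions. -/
def ExtClosedCat (K : Type) [Field K] (n : ℕ) (cond : ℕ × ℕ → Prop) : Prop :=
  ∀ X Y Z : ARep K n, InCat K n cond X → InCat K n cond Z →
    Nonempty (QRep.Extension X Y Z) → InCat K n cond Y

/-- `a` is a bracket vector (membership in `M` stated separately): whenever
`1 ≤ j ≤ a i` (and `i + j` is a vertex), `j + a_{i+j} ≤ a_i`. 0-based indices. -/
def IsBracketVecN (n : ℕ) (a : ℕ → ℕ) : Prop :=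
  ∀ i < n, ∀ j : ℕ, 1 ≤ j → j ≤ a i → i + j < n → j + a (i + j) ≤ a i

/-! A surjection from `⊕ E^{kl}` (over `F_a`) onto `⊕ E^{ij}` projects onto each summand
`E^{ij}`, so it is nonzero at the vertex `i`, and hence so is its restriction to some summand
`E^{kl}` of the source. A morphism `E^{kl} → E^{ij}` that is nonzero at `i` forces `k = i`
(the arrow into `i` is onto in `E^{kl}` and starts at a zero space of `E^{ij}`) and `j ≤ l`
(otherwise, walking down from `l` along arrows that are injective in `E^{ij}`, it would vanish
at every vertex of `[i, l]`). Then `j ≤ l < k + a_k = i + a_i`. -/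

namespace QRep

variable {K : Type} [Field K] {ι E : Type} {s t : E → ι}

namespace Hom

def comp {X Y Z : QRep K s t} (g : Hom Y Z) (f : Hom X Y) : Hom X Z where
  φ i := (g.φ i).comp (f.φ i)
  comm e := by
    rw [← LinearMap.comp_assoc, g.comm e, LinearMap.comp_assoc, f.comm e, LinearMap.comp_assoc]

def inl (X Y : QRep K s t) : Hom X (X.dsum Y) where
  φ i := LinearMap.inl K (X.V i) (Y.V i)
  comm e := by ext x; exact Prod.ext rfl (map_zero (Y.f e))

def inr (X Y : QRep K s t) : Hom Y (X.dsum Y) where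
  φ i := LinearMap.inr K (X.V i) (Y.V i)
  comm e := by ext x; exact Prod.ext (map_zero (X.f e)) rfl

def fst (X Y : QRep K s t) : Hom (X.dsum Y) X where
  φ i := LinearMap.fst K (X.V i) (Y.V i)
  comm _ := rfl

def snd (X Y : QRep K s t) : Hom (X.dsum Y) Y where
  φ i := LinearMap.snd K (X.V i) (Y.V i)
  comm _ := rfl

variable {X Y : QRep K s t}

theorem φ_source_eq_zero (h : Hom X Y) {e : E} (hY : Function.Injective (Y.f e))
    (h0 : (h.φ (t e)).comp (X.f e) = 0) : h.φ (s e) = 0 := by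
  ext x
  apply hY
  rw [LinearMap.zero_apply, map_zero, ← LinearMap.comp_apply, h.comm e, h0, LinearMap.zero_apply]

theorem φ_target_eq_zero (h : Hom X Y) {e : E} (hX : Function.Surjective (X.f e))
    (h0 : (Y.f e).comp (h.φ (s e)) = 0) : h.φ (t e) = 0 := by
  ext y
  obtain ⟨x, rfl⟩ := hX y
  rw [← LinearMap.comp_apply, ← h.comm e, h0, LinearMap.zero_apply, LinearMap.zero_apply]

end Hom

theorem exists_hom_dsumList_surjective_of_mem :
    ∀ {L : List (QRep K s t)} {X : QRep K s t}, X ∈ L →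
      ∃ h : Hom (dsumList L) X, h.Surjective
  | Y :: L, X, hX => by
    rcases List.mem_cons.1 hX with rfl | hX
    · exact ⟨Hom.fst X (dsumList L), fun i x => ⟨(x, 0), rfl⟩⟩
    · obtain ⟨h, hh⟩ := exists_hom_dsumList_surjective_of_mem hX
      refine ⟨h.comp (Hom.snd Y (dsumList L)), fun i x => ?_⟩
      obtain ⟨y, hy⟩ := hh i x
      exact ⟨(0, y), hy⟩

theorem exists_mem_hom_ne_zero_of_dsumList {W : QRep K s t} {i : ι} :
    ∀ {L : List (QRep K s t)} (g : Hom (dsumList L) W), g.φ i ≠ 0 →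
      ∃ X ∈ L, ∃ h : Hom X W, h.φ i ≠ 0
  | [], g, hg => by
    have : Subsingleton ((dsumList ([] : List (QRep K s t))).V i) :=
      inferInstanceAs (Subsingleton PUnit)
    exact absurd (Subsingleton.elim _ _) hg
  | Y :: L, g, hg => by
    by_cases hY : (g.comp (Hom.inl Y (dsumList L))).φ i = 0
    · have hL : (g.comp (Hom.inr Y (dsumList L))).φ i ≠ 0 := fun hL =>
        hg (LinearMap.prod_ext (hY.trans (LinearMap.zero_comp _).symm)
          (hL.trans (LinearMap.zero_comp _).symm))
      obtain ⟨X, hX, h, hh⟩ := exists_mem_hom_ne_zero_of_dsumList _ hL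
      exact ⟨X, List.mem_cons_of_mem _ hX, h, hh⟩
    · exact ⟨Y, List.mem_cons_self, _, hY⟩

end QRep

namespace Eij

variable {K : Type} [Field K] {n i j : ℕ}

theorem subsingleton_V {p : Fin n} (hp : ¬(i ≤ p.val ∧ p.val ≤ j)) :
    Subsingleton ((Eij K n i j).V p) :=
  Submodule.subsingleton_iff_eq_bot.2 (if_neg hp)

theorem nontrivial_V {p : Fin n} (hp : i ≤ p.val ∧ p.val ≤ j) :
    Nontrivial ((Eij K n i j).V p) :=
  Submodule.nontrivial_iff_ne_bot.2 <| by
    rw [show ESub K n i j p = ⊤ from if_pos hp]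
    exact top_ne_bot

theorem coe_f_apply (e : Fin (n - 1)) (he : i ≤ e.val + 1 ∧ e.val + 1 ≤ j)
    (x : (Eij K n i j).V (ASrc n e)) : ((Eij K n i j).f e x).val = x.val := by
  show (toSub (ESub K n i j (ATgt n e)) x.val).val = x.val
  rw [toSub, dif_pos (show ESub K n i j (ATgt n e) = ⊤ from if_pos he)]
  rfl

theorem f_injective (e : Fin (n - 1)) (he : i ≤ e.val + 1 ∧ e.val + 1 ≤ j) :
    Function.Injective ((Eij K n i j).f e) := fun x y hxy =>
  Subtype.ext <| by rw [← coe_f_apply e he x, ← coe_f_apply e he y, hxy]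

theorem f_surjective (e : Fin (n - 1)) (hs : i ≤ e.val ∧ e.val ≤ j)
    (ht : i ≤ e.val + 1 ∧ e.val + 1 ≤ j) : Function.Surjective ((Eij K n i j).f e) := fun y =>
  ⟨⟨y.val, by rw [show ESub K n i j (ASrc n e) = ⊤ from if_pos hs]; trivial⟩,
    Subtype.ext (coe_f_apply e ht _)⟩

variable {k l : ℕ}

theorem φ_eq_zero_of_not_mem {Y : ARep K n} (h : QRep.Hom (Eij K n k l) Y) {p : Fin n}
    (hp : ¬(k ≤ p.val ∧ p.val ≤ l)) : h.φ p = 0 :=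
  have := subsingleton_V (K := K) hp
  Subsingleton.elim _ _

theorem left_eq_of_hom_ne_zero (hi : i < n) (h : QRep.Hom (Eij K n k l) (Eij K n i j))
    (hne : h.φ ⟨i, hi⟩ ≠ 0) : k = i := by
  have hkil : k ≤ i ∧ i ≤ l := by_contra fun hout => hne (φ_eq_zero_of_not_mem h hout)
  by_contra hne_ki
  obtain ⟨m, rfl⟩ : ∃ m, i = m + 1 := ⟨i - 1, by omega⟩
  let e : Fin (n - 1) := ⟨m, by omega⟩
  have : Subsingleton ((Eij K n (m + 1) j).V (ASrc n e)) := subsingleton_V (by simp [ASrc, e])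
  refine hne (h.φ_target_eq_zero (e := e) ?_ ?_)
  · exact f_surjective e (by simp only [e]; omega) (by simp only [e]; omega)
  · rw [Subsingleton.elim (h.φ (ASrc n e)) 0, LinearMap.comp_zero]

theorem right_le_of_hom_ne_zero (hjn : j < n) (hi : i < n)
    (h : QRep.Hom (Eij K n k l) (Eij K n i j)) (hne : h.φ ⟨i, hi⟩ ≠ 0) : j ≤ l := by
  have hil : i ≤ l := by_contra fun hli => hne (φ_eq_zero_of_not_mem h (by simp; omega))
  by_contra hlj
  refine hne (Nat.decreasingInduction' (P := fun p => ∀ hp : p < n, h.φ ⟨p, hp⟩ = 0)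
    (fun p hpl hip ih hp => ?_) hil (fun hl => ?_) hi)
  · refine h.φ_source_eq_zero (e := ⟨p, by omega⟩) (f_injective _ (by simp only; omega)) ?_
    rw [show h.φ (ATgt n ⟨p, _⟩) = 0 from ih (by omega), LinearMap.zero_comp]
  · let e : Fin (n - 1) := ⟨l, by omega⟩
    have : Subsingleton ((Eij K n k l).V (ATgt n e)) := subsingleton_V (by simp [ATgt, e])
    refine h.φ_source_eq_zero (e := e) (f_injective _ (by simp only [e]; omega)) ?_
    rw [Subsingleton.elim ((Eij K n k l).f e) 0, LinearMap.comp_zero]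

end Eij

theorem stmt9_general (K : Type) [Field K] (n : ℕ) (a : ℕ → ℕ)
    (L : List (ℕ × ℕ)) (hL : ∀ pr ∈ L, condF n a pr)
    (L' : List (ℕ × ℕ)) (hL' : ∀ pr ∈ L', pr.1 ≤ pr.2 ∧ pr.2 < n)
    (f : QRep.Hom (intervalSum K n L) (intervalSum K n L')) (hf : f.Surjective) :
    ∀ pr ∈ L', condF n a pr := by
  rintro ⟨i, j⟩ hmem
  obtain ⟨hij, hjn⟩ := hL' _ hmem
  refine ⟨hij, hjn, ?_⟩
  have hi : i < n := lt_of_le_of_lt hij hjn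
  obtain ⟨p, hp⟩ := QRep.exists_hom_dsumList_surjective_of_mem
    (List.mem_map_of_mem (f := fun pr : ℕ × ℕ => Eij K n pr.1 pr.2) hmem)
  have : Nontrivial ((Eij K n i j).V ⟨i, hi⟩) := Eij.nontrivial_V ⟨le_rfl, hij⟩
  have hne : (p.comp f).φ ⟨i, hi⟩ ≠ 0 := LinearMap.ne_zero_of_surjective ((hp _).comp (hf _))
  obtain ⟨_, hX, h, hh⟩ := QRep.exists_mem_hom_ne_zero_of_dsumList _ hne
  obtain ⟨⟨k, l⟩, hkl, rfl⟩ := List.mem_map.1 hX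
  obtain rfl := Eij.left_eq_of_hom_ne_zero hi h hh
  have hjl := Eij.right_le_of_hom_ne_zero hjn hi h hh
  have hlk := (hL _ hkl).2.2
  dsimp only at hjl hlk ⊢
  omega

/-- for `a ∈ M` (i.e. `a i ≤ n - i`, 0-based), the subcategory `C_a` is closed
under quotients: if a direct sum of intervals of `F_a` surjects onto a direct sum of
intervals, every one of the latter intervals lies in `F_a`. -/
theorem stmt9 (K : Type) [Field K] (n : ℕ) (a : ℕ → ℕ) (hM : ∀ i < n, a i ≤ n - i)
    (L : List (ℕ × ℕ)) (hL : ∀ pr ∈ L, condF n a pr)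
    (L' : List (ℕ × ℕ)) (hL' : ∀ pr ∈ L', pr.1 ≤ pr.2 ∧ pr.2 < n)
    (f : QRep.Hom (intervalSum K n L) (intervalSum K n L')) (hf : f.Surjective) :
    ∀ pr ∈ L', condF n a pr :=
  stmt9_general K n a L hL L' hL' f hf
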